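/- Let 0 < ν < 1 and 0 < δ < 1/2, and let S = {ρ e^{it} ∈ ℂ : 0 < ρ < 2^ν, |t| < π(1−δ)}. Then for every ε > 0 there exists a polynomial P with complex coefficients such that P(0) = 1 and ∫_S |P(w)|² |w|^{2(1/ν − 1)} dA(w) < ε. -/

import Mathlib

open MeasureTheory Real

/-- The open sector of radius `2^ν` and half-aperture `π(1-δ)` around the
positive real axis. -/
def sector (ν δ : ℝ) : Set ℂ :=
  {w : ℂ | ∃ ρ t : ℝ, 0 < ρ ∧ ρ < (2 : ℝ) ^ ν ∧ |t| < π * (1 - δ) ∧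
    w = (ρ : ℂ) * Complex.exp (Complex.I * (t : ℂ))}

/-!
Each `s / (w + s)`, `s > 0`, equals `1` at the origin and tends to `0` on the sector as `s → 0`,
boundedly since the sector keeps distance `sin (π δ) * s` from `-s`; as the weight is integrable
(`ν ≤ 1`), dominated convergence makes the weighted norms small. Because the ray `(-∞, 0)` misses
the closure of the sector, Runge's theorem approximates each `s / (w + s)` uniformly by
polynomials, which are then normalised to take the value `1` at `0`.
-/

open Set Filter Topology Polynomial

theorem exists_polynomial_approx_inv_sub_of_not_isBounded {K : Set ℂ} (hK : IsCompact K) {z : ℂ}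
    (hz : ¬ Bornology.IsBounded (connectedComponentIn Kᶜ z)) {η : ℝ} (hη : 0 < η) :
    ∃ p : ℂ[X], ∀ w ∈ K, ‖p.eval w - (z - w)⁻¹‖ < η := by
  have : CompactSpace K := isCompact_iff_compactSpace.mp hK
  set A := (polynomialFunctions K).topologicalClosure
  have : IsClosed (A : Set C(K, ℂ)) := (polynomialFunctions K).isClosed_topologicalClosure
  let x : A :=
    ⟨toContinuousMapOnAlgHom K X, (polynomialFunctions K).le_topologicalClosure ⟨X, trivial, rfl⟩⟩
  have hspec : spectrum ℂ (x : C(K, ℂ)) = K := by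
    rw [ContinuousMap.spectrum_eq_range]
    ext w
    simp [x, toContinuousMapOn_X_eq_restrict_id]
  -- The spectrum of `x` in `A` adds to `K` only bounded components of `Kᶜ`.
  have hzA : z ∉ spectrum ℂ x := fun h => hz (by
    simpa [hspec] using Subalgebra.spectrum_isBounded_connectedComponentIn A x h)
  obtain ⟨u, hu⟩ := spectrum.notMem_iff.mp hzA
  obtain ⟨q, ⟨p, -, rfl⟩, hpq⟩ := Metric.mem_closure_iff.mp (↑u⁻¹ : A).2 η hη
  refine ⟨p, fun w hw => ?_⟩
  have hinv : ((u⁻¹ : Aˣ) : C(K, ℂ)) ⟨w, hw⟩ = (z - w)⁻¹ := by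
    have := congr(((($u.inv_mul : A) : C(K, ℂ)) ⟨w, hw⟩))
    rw [hu] at this
    exact eq_inv_of_mul_eq_one_left (by simpa [x] using this)
  calc ‖p.eval w - (z - w)⁻¹‖
      = ‖(toContinuousMapOnAlgHom K p - ((u⁻¹ : Aˣ) : C(K, ℂ))) ⟨w, hw⟩‖ := by simp [hinv]
    _ ≤ dist (toContinuousMapOnAlgHom K p) ((u⁻¹ : Aˣ) : C(K, ℂ)) := by
        rw [dist_eq_norm]; exact ContinuousMap.norm_coe_le_norm _ _
    _ < η := by rw [dist_comm]; exact hpq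

theorem not_isBounded_connectedComponentIn_compl_of_forall_neg_notMem {K : Set ℂ}
    (hK : ∀ σ : ℝ, 0 < σ → -(σ : ℂ) ∉ K) {s : ℝ} (hs : 0 < s) :
    ¬ Bornology.IsBounded (connectedComponentIn Kᶜ (-s)) := by
  set ray := (fun σ : ℝ => -(σ : ℂ)) '' Ioi 0
  have hray : ray ⊆ connectedComponentIn Kᶜ (-s) :=
    (isPreconnected_Ioi.image _ (by fun_prop)).subset_connectedComponentIn ⟨s, hs, rfl⟩
      (by rintro _ ⟨σ, hσ, rfl⟩; exact hK σ hσ)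
  intro hbdd
  obtain ⟨C, hC⟩ := (hbdd.subset hray).exists_norm_le
  have := hC _ ⟨max C 0 + 1, (by positivity : (0 : ℝ) < max C 0 + 1), rfl⟩
  rw [norm_neg, Complex.norm_real, Real.norm_of_nonneg (by positivity)] at this
  linarith [le_max_left C 0]

theorem exists_polynomial_eval_zero_eq_one_approx_ofReal_mul_inv_add {T : Set ℂ}
    (hT : Bornology.IsBounded T) (hT₀ : 0 ∈ T) {c : ℝ} (hc : 0 < c)
    (hTc : ∀ w ∈ T, ∀ σ : ℝ, 0 < σ → c * σ ≤ ‖w + σ‖) {s η : ℝ} (hs : 0 < s) (hη : 0 < η) :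
    ∃ P : ℂ[X], P.eval 0 = 1 ∧ ∀ w ∈ T, ‖P.eval w - s * (w + s)⁻¹‖ ≤ η := by
  have hK : ∀ σ : ℝ, 0 < σ → -(σ : ℂ) ∉ closure T := by
    intro σ hσ hmem
    have hclosed : IsClosed {w : ℂ | c * σ ≤ ‖w + σ‖} := isClosed_le (by fun_prop) (by fun_prop)
    have : c * σ ≤ ‖-(σ : ℂ) + σ‖ := closure_minimal (fun w hw => hTc w hw σ hσ) hclosed hmem
    rw [neg_add_cancel, norm_zero] at this
    nlinarith
  obtain ⟨p, hp⟩ := exists_polynomial_approx_inv_sub_of_not_isBounded hT.isCompact_closure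
    (not_isBounded_connectedComponentIn_compl_of_forall_neg_notMem hK hs) (η := η / (2 * s))
    (by positivity)
  have hq : ∀ w ∈ T, ‖(C (-(s : ℂ)) * p).eval w - s * (w + s)⁻¹‖ ≤ η / 2 := by
    intro w hw
    have hws : (s : ℂ) * (w + s)⁻¹ = -s * (-s - w)⁻¹ := by
      rw [show -(s : ℂ) - w = -(w + s) by ring, inv_neg]; ring
    rw [eval_mul, eval_C, hws, ← mul_sub, norm_mul, norm_neg, Complex.norm_real,
      Real.norm_of_nonneg hs.le]
    have := hp w (subset_closure hw)
    rw [lt_div_iff₀ (by positivity)] at this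
    linarith
  refine ⟨C (-(s : ℂ)) * p + C (1 - (C (-(s : ℂ)) * p).eval 0), by simp, fun w hw => ?_⟩
  have h₀ := hq 0 hT₀
  rw [zero_add, mul_inv_cancel₀ (by exact_mod_cast hs.ne'), norm_sub_rev] at h₀
  calc _ = ‖((C (-(s : ℂ)) * p).eval w - s * (w + s)⁻¹) + (1 - (C (-(s : ℂ)) * p).eval 0)‖ := by
        rw [eval_add, eval_C]; ring_nf
    _ ≤ η / 2 + η / 2 := (norm_add_le _ _).trans (add_le_add (hq w hw) h₀)
    _ = η := add_halves η

theorem sector_eq_image_polarCoord_symm (ν δ : ℝ) :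
    sector ν δ =
      Complex.polarCoord.symm '' (Ioo 0 (2 ^ ν) ×ˢ Ioo (-(π * (1 - δ))) (π * (1 - δ))) := by
  ext w
  simp only [sector, mem_image, Prod.exists, mem_prod, mem_Ioo, ← abs_lt,
    Complex.polarCoord_symm_apply, Complex.ofReal_cos, Complex.ofReal_sin, ← Complex.exp_mul_I,
    mul_comm Complex.I]
  constructor
  · rintro ⟨ρ, t, hρ, hρR, ht, rfl⟩; exact ⟨ρ, t, ⟨⟨hρ, hρR⟩, ht⟩, rfl⟩
  · rintro ⟨ρ, t, ⟨⟨hρ, hρR⟩, ht⟩, rfl⟩; exact ⟨ρ, t, hρ, hρR, ht, rfl⟩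

section Sector

variable {ν δ : ℝ} {w : ℂ}

theorem isOpen_sector (hδ : 0 ≤ δ) : IsOpen (sector ν δ) := by
  rw [sector_eq_image_polarCoord_symm]
  refine Complex.polarCoord.isOpen_image_symm_of_subset_target (isOpen_Ioo.prod isOpen_Ioo) ?_
  rw [Complex.polarCoord_target]
  refine prod_mono Ioo_subset_Ioi_self (Ioo_subset_Ioo ?_ ?_) <;> nlinarith [pi_pos]

theorem norm_mem_Ioo_of_mem_sector (hw : w ∈ sector ν δ) : ‖w‖ ∈ Ioo 0 (2 ^ ν) := by
  rw [sector_eq_image_polarCoord_symm] at hw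
  obtain ⟨⟨ρ, t⟩, ⟨hρ, -⟩, rfl⟩ := hw
  simpa [Complex.norm_mul, abs_of_pos hρ.1] using hρ

theorem zero_notMem_sector : (0 : ℂ) ∉ sector ν δ :=
  fun h => (norm_mem_Ioo_of_mem_sector h).1.ne norm_zero.symm

theorem sector_subset_closedBall : sector ν δ ⊆ Metric.closedBall 0 (2 ^ ν) :=
  fun _ hw => mem_closedBall_zero_iff.mpr (norm_mem_Ioo_of_mem_sector hw).2.le

theorem integrableOn_norm_rpow_sector {p : ℝ} (hp : 0 ≤ p) :
    IntegrableOn (fun w : ℂ => ‖w‖ ^ p) (sector ν δ) :=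
  ((continuous_norm.rpow_const fun _ => Or.inr hp).continuousOn.integrableOn_compact
    (isCompact_closedBall 0 _)).mono_set sector_subset_closedBall

theorem sin_mul_le_norm_add_of_mem_sector (hδ : 0 ≤ δ) (hw : w ∈ sector ν δ) {σ : ℝ}
    (hσ : 0 ≤ σ) : sin (π * δ) * σ ≤ ‖w + σ‖ := by
  rw [sector_eq_image_polarCoord_symm] at hw
  obtain ⟨⟨ρ, t⟩, ⟨⟨hρ, -⟩, ht⟩, rfl⟩ := hw
  have hcos : -cos (π * δ) ≤ cos t := by
    rw [← cos_abs t, ← cos_pi_sub, ← mul_one_sub]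
    exact cos_le_cos_of_nonneg_of_le_pi (abs_nonneg t) (by nlinarith [pi_pos]) (abs_lt.mpr ht).le
  have hnorm : ‖Complex.polarCoord.symm (ρ, t) + σ‖ ^ 2 = ρ ^ 2 + 2 * ρ * σ * cos t + σ ^ 2 := by
    rw [Complex.sq_norm, Complex.normSq_apply]
    simp only [Complex.polarCoord_symm_apply, Complex.add_re, Complex.mul_re, Complex.add_im,
      Complex.mul_im, Complex.ofReal_re, Complex.ofReal_im, Complex.I_re, Complex.I_im]
    linear_combination ρ ^ 2 * sin_sq_add_cos_sq t
  refine le_of_sq_le_sq ?_ (norm_nonneg _)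
  rw [hnorm]
  nlinarith [sin_sq_add_cos_sq (π * δ), sq_nonneg (ρ - cos (π * δ) * σ),
    mul_nonneg (mul_nonneg hρ.le hσ) (neg_le_iff_add_nonneg.mp hcos)]

theorem sin_mul_le_norm_add_of_mem_insert_zero_sector (hδ : 0 ≤ δ)
    (hw : w ∈ insert 0 (sector ν δ)) {σ : ℝ} (hσ : 0 ≤ σ) : sin (π * δ) * σ ≤ ‖w + σ‖ := by
  rcases hw with rfl | hw
  · simpa [abs_of_nonneg hσ] using mul_le_of_le_one_left hσ (sin_le_one _)
  · exact sin_mul_le_norm_add_of_mem_sector hδ hw hσ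

end Sector

theorem setIntegral_norm_sq_mul_le_of_norm_sub_le {α E : Type*} [MeasurableSpace α]
    [NormedAddCommGroup E] {μ : Measure α} {S : Set α} (hS : MeasurableSet S) {W : α → ℝ}
    (hW₀ : ∀ x ∈ S, 0 ≤ W x) (hW : IntegrableOn W S μ) {f g : α → E}
    (hf : AEStronglyMeasurable f (μ.restrict S))
    (hg : IntegrableOn (fun x => ‖g x‖ ^ 2 * W x) S μ) {η : ℝ}
    (hfg : ∀ x ∈ S, ‖f x - g x‖ ≤ η) :
    ∫ x in S, ‖f x‖ ^ 2 * W x ∂μ ≤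
      2 * ∫ x in S, ‖g x‖ ^ 2 * W x ∂μ + 2 * η ^ 2 * ∫ x in S, W x ∂μ := by
  have hpt : ∀ x ∈ S, ‖f x‖ ^ 2 * W x ≤ 2 * (‖g x‖ ^ 2 * W x) + 2 * η ^ 2 * W x := by
    intro x hx
    have h₁ : ‖f x‖ ≤ ‖g x‖ + η :=
      (norm_le_norm_add_norm_sub' (f x) (g x)).trans (by linarith [hfg x hx])
    have h₂ : ‖f x‖ ^ 2 ≤ 2 * ‖g x‖ ^ 2 + 2 * η ^ 2 := by
      nlinarith [norm_nonneg (f x), norm_nonneg (f x - g x), hfg x hx, sq_nonneg (‖g x‖ - η)]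
    nlinarith [hW₀ x hx]
  have hbound : IntegrableOn (fun x => 2 * (‖g x‖ ^ 2 * W x) + 2 * η ^ 2 * W x) S μ :=
    (hg.const_mul 2).add (hW.const_mul _)
  have hfW : IntegrableOn (fun x => ‖f x‖ ^ 2 * W x) S μ := by
    refine hbound.mono' ((hf.norm.pow 2).mul hW.aestronglyMeasurable) ?_
    refine (ae_restrict_iff' hS).mpr (Eventually.of_forall fun x hx => ?_)
    rw [Real.norm_of_nonneg (mul_nonneg (sq_nonneg _) (hW₀ x hx))]
    exact hpt x hx
  calc ∫ x in S, ‖f x‖ ^ 2 * W x ∂μ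
      ≤ ∫ x in S, (2 * (‖g x‖ ^ 2 * W x) + 2 * η ^ 2 * W x) ∂μ :=
        setIntegral_mono_on hfW hbound hS hpt
    _ = _ := by
        rw [integral_add (hg.const_mul 2) (hW.const_mul _), integral_const_mul, integral_const_mul]

theorem norm_ofReal_mul_inv_add_le {c s : ℝ} (hc : 0 < c) (hs : 0 < s) {w : ℂ}
    (hw : c * s ≤ ‖w + s‖) : ‖(s : ℂ) * (w + s)⁻¹‖ ≤ c⁻¹ := by
  have hpos : 0 < ‖w + s‖ := lt_of_lt_of_le (by positivity) hw
  rw [norm_mul, norm_inv, Complex.norm_real, Real.norm_of_nonneg hs.le, ← div_eq_mul_inv,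
    div_le_iff₀ hpos, le_inv_mul_iff₀ hc]
  exact hw

section InvAdd

variable {μ : Measure ℂ} {S : Set ℂ} {c : ℝ} {W : ℂ → ℝ}

theorem integrableOn_norm_sq_ofReal_mul_inv_add_mul (hS : MeasurableSet S) (hc : 0 < c)
    (hSc : ∀ w ∈ S, ∀ σ : ℝ, 0 < σ → c * σ ≤ ‖w + σ‖) (hW : IntegrableOn W S μ) {s : ℝ}
    (hs : 0 < s) : IntegrableOn (fun w : ℂ => ‖(s : ℂ) * (w + s)⁻¹‖ ^ 2 * W w) S μ := by
  refine (hW.norm.const_mul (c⁻¹ ^ 2)).mono'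
    ((Measurable.aestronglyMeasurable (by fun_prop)).mul hW.aestronglyMeasurable) ?_
  refine (ae_restrict_iff' hS).mpr (Eventually.of_forall fun w hw => ?_)
  rw [norm_mul, norm_pow, norm_norm]
  gcongr
  exact norm_ofReal_mul_inv_add_le hc hs (hSc w hw s hs)

theorem tendsto_setIntegral_norm_sq_ofReal_mul_inv_add_mul (hS : MeasurableSet S)
    (hS₀ : (0 : ℂ) ∉ S) (hc : 0 < c) (hSc : ∀ w ∈ S, ∀ σ : ℝ, 0 < σ → c * σ ≤ ‖w + σ‖)
    (hW : IntegrableOn W S μ) :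
    Tendsto (fun s : ℝ => ∫ w in S, ‖(s : ℂ) * (w + s)⁻¹‖ ^ 2 * W w ∂μ) (𝓝[>] 0) (𝓝 0) := by
  suffices h : Tendsto (fun s : ℝ => ∫ w in S, ‖(s : ℂ) * (w + s)⁻¹‖ ^ 2 * W w ∂μ) (𝓝[>] 0)
      (𝓝 (∫ w in S, (0 : ℝ) ∂μ)) by simpa using h
  refine tendsto_integral_filter_of_dominated_convergence (fun w => c⁻¹ ^ 2 * ‖W w‖) ?_ ?_
    (hW.norm.const_mul _) ?_
  · exact Eventually.of_forall fun s =>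
      (Measurable.aestronglyMeasurable (by fun_prop)).mul hW.aestronglyMeasurable
  · filter_upwards [self_mem_nhdsWithin] with s hs
    refine (ae_restrict_iff' hS).mpr (Eventually.of_forall fun w hw => ?_)
    rw [norm_mul, norm_pow, norm_norm]
    gcongr
    exact norm_ofReal_mul_inv_add_le hc hs (hSc w hw s hs)
  · refine (ae_restrict_iff' hS).mpr (Eventually.of_forall fun w hw => ?_)
    have hw₀ : w ≠ 0 := fun h => hS₀ (h ▸ hw)
    have : ContinuousAt (fun s : ℝ => ‖(s : ℂ) * (w + s)⁻¹‖ ^ 2 * W w) 0 := by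
      fun_prop (disch := simpa using hw₀)
    simpa using this.tendsto.mono_left nhdsWithin_le_nhds

end InvAdd

/-- There are polynomials with value `1` at the origin and arbitrarily small weighted
Bergman norm on the sector `S`. -/
theorem exists_poly_small_weighted_norm (ν δ : ℝ) (hν₀ : 0 < ν) (hν₁ : ν < 1)
    (hδ₀ : 0 < δ) (hδ₁ : δ < 1 / 2) (ε : ℝ) (hε : 0 < ε) :
    ∃ P : Polynomial ℂ, P.eval 0 = 1 ∧
      (∫ w in sector ν δ,
          ‖P.eval w‖ ^ 2 * ‖w‖ ^ (2 * (1 / ν - 1))) < ε := by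
  set S := sector ν δ
  have hSm : MeasurableSet S := (isOpen_sector hδ₀.le).measurableSet
  have hc : 0 < sin (π * δ) := sin_pos_of_pos_of_lt_pi (by positivity) (by nlinarith [pi_pos])
  have hT : ∀ w ∈ insert 0 S, ∀ σ : ℝ, 0 < σ → sin (π * δ) * σ ≤ ‖w + σ‖ :=
    fun w hw σ hσ => sin_mul_le_norm_add_of_mem_insert_zero_sector hδ₀.le hw hσ.le
  have hSc w (hw : w ∈ S) := hT w (mem_insert_of_mem 0 hw)
  have hW := integrableOn_norm_rpow_sector (ν := ν) (δ := δ)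
    (p := 2 * (1 / ν - 1)) (by nlinarith [one_le_one_div hν₀ hν₁.le])
  set J := ∫ w in S, ‖w‖ ^ (2 * (1 / ν - 1))
  have hsq : Tendsto (fun s : ℝ => 2 * s ^ 2 * J) (𝓝[>] 0) (𝓝 0) := by
    have : Continuous (fun s : ℝ => 2 * s ^ 2 * J) := by fun_prop
    simpa using (this.tendsto 0).mono_left nhdsWithin_le_nhds
  have hlim := ((tendsto_setIntegral_norm_sq_ofReal_mul_inv_add_mul hSm zero_notMem_sector hc
    hSc hW).const_mul 2).add hsq
  -- the same `s` also serves as the accuracy of the polynomial approximation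
  obtain ⟨s, hsε, hs⟩ :=
    ((hlim.eventually (gt_mem_nhds (by simpa using hε))).and self_mem_nhdsWithin).exists
  obtain ⟨P, hP₀, hP⟩ := exists_polynomial_eval_zero_eq_one_approx_ofReal_mul_inv_add
    ((Metric.isBounded_closedBall.subset sector_subset_closedBall).insert 0) (mem_insert 0 S)
    hc hT hs hs
  exact ⟨P, hP₀, (setIntegral_norm_sq_mul_le_of_norm_sub_le hSm (fun _ _ => by positivity) hW
    P.continuous.aestronglyMeasurable (integrableOn_norm_sq_ofReal_mul_inv_add_mul hSm hc hSc hW hs)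
    fun w hw => hP w (mem_insert_of_mem 0 hw)).trans_lt hsε⟩
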